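/- The set A = ⋃_{n=0}^∞ [e^{2n}, e^{2n+1}) satisfies: A ∈ 𝓐^uni with α(A) = 1/2, but A ∉ 𝓒, i.e. ρ_A(x) does not converge as x → ∞. Hence 𝓒 is a proper subset of 𝓐^uni: the measure α assigns a uniquely determined probability to some sets without natural density. -/

import Mathlib

open MeasureTheory Filter Set Topology

noncomputable section

namespace UPN

/-- The half line `[0,∞)` viewed as a subset of `ℝ`. -/
def Ray : Set ℝ := Set.Ici 0

/-- The indicator function `1_A`. -/
def ind (A : Set ℝ) : ℝ → ℝ := Set.indicator A fun _ => (1 : ℝ)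

/-- The collection `𝓜` of countable unions `⋃ᵢ [a_{2i-1}, a_{2i})` for a
nondecreasing nonnegative sequence `a`. -/
def Mcal : Set (Set ℝ) :=
  {A | ∃ a : ℕ → ℝ, 0 ≤ a 0 ∧ Monotone a ∧
        A = ⋃ i : ℕ, Set.Ico (a (2 * i)) (a (2 * i + 1))}

/-- The density function `ρ_A`: `ρ_A(0) = 0` and `ρ_A(x) = (1/x)∫₀ˣ 1_A(y) dy`. -/
def rho (A : Set ℝ) (x : ℝ) : ℝ :=
  if x = 0 then 0 else (1 / x) * ∫ y in (0:ℝ)..x, ind A y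

/-- The collection `𝓒` of elements of `𝓜` having natural density. -/
def Ccal : Set (Set ℝ) :=
  {A | A ∈ Mcal ∧ ∃ l : ℝ, Tendsto (rho A) atTop (𝓝 l)}

/-- The natural density `λ(A) = lim_{x→∞} ρ_A(x)`. -/
def lam (A : Set ℝ) : ℝ := limUnder atTop (rho A)

/-- `S_A(x) = m(A ∩ [0,x))`. -/
def Sfn (A : Set ℝ) (x : ℝ) : ℝ := (volume (A ∩ Set.Ico 0 x)).toReal

/-- The thinning operation `A ∘ B = {x : x ∈ A ∧ S_A(x) ∈ B}`. -/
def thin (A B : Set ℝ) : Set ℝ := {x | x ∈ A ∧ Sfn A x ∈ B}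

/-- An f-system on `[0,∞)`: a nonempty collection of subsets of `[0,∞)` closed
under complements (in `[0,∞)`) and finite disjoint unions. -/
structure IsFSystem (F : Set (Set ℝ)) : Prop where
  nonempty : F.Nonempty
  subset_ray : ∀ A ∈ F, A ⊆ Ray
  compl_mem : ∀ A ∈ F, Ray \ A ∈ F
  union_mem : ∀ A ∈ F, ∀ B ∈ F, A ∩ B = ∅ → A ∪ B ∈ F

/-- A probability pair `(F, μ)` on `[0,∞)`: `F` is an f-system and `μ` is a finitely
additive probability measure on `F` with values in `[0,1]` and `μ([0,∞)) = 1`. -/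
structure IsProbPair (F : Set (Set ℝ)) (μ : Set ℝ → ℝ) : Prop where
  fsystem : IsFSystem F
  nonneg : ∀ A ∈ F, 0 ≤ μ A
  le_one : ∀ A ∈ F, μ A ≤ 1
  ray_eq_one : μ Ray = 1
  additive : ∀ A ∈ F, ∀ B ∈ F, A ∩ B = ∅ → μ (A ∪ B) = μ A + μ B

/-- A weakly thinnable pair (WTP). -/
structure IsWTP (F : Set (Set ℝ)) (μ : Set ℝ → ℝ) : Prop where
  pair : IsProbPair F μ
  Ccal_subset : Ccal ⊆ F
  subset_Mcal : F ⊆ Mcal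
  P1 : ∀ C ∈ Ccal, ∀ A ∈ F, thin C A ∈ F ∧ μ (thin C A) = μ C * μ A
  P2 : ∀ A ∈ F, ∀ B ∈ F, (∀ x : ℝ, Sfn B x ≤ Sfn A x) → μ B ≤ μ A
  P3 : ∀ c : ℝ, 0 ≤ c → μ (Set.Ici c) = 1

/-- Coherence of a probability measure `μ` on an f-system `F` on `[0,∞)`. -/
def Coherent (F : Set (Set ℝ)) (μ : Set ℝ → ℝ) : Prop :=
  ∀ (n : ℕ) (a : Fin n → ℝ) (A : Fin n → Set ℝ), (∀ i, A i ∈ F) →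
    0 ≤ ⨆ x : Ray, ∑ i, a i * (ind (A i) ↑x - μ (A i))

/-- `σ_A(D,x) = (1/D) ∫_x^{x+D} 1_A(y) dy`. -/
def sigmaFn (A : Set ℝ) (D x : ℝ) : ℝ := (1 / D) * ∫ y in x..(x + D), ind A y

/-- `U(A) = limsup_{D→∞} sup_{x>0} σ_A(D,x)`. -/
def Ufn (A : Set ℝ) : ℝ :=
  limsup (fun D => ⨆ x : Set.Ioi (0:ℝ), sigmaFn A D ↑x) atTop

/-- `L(A) = liminf_{D→∞} inf_{x>0} σ_A(D,x)`. -/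
def Lfn (A : Set ℝ) : ℝ :=
  liminf (fun D => ⨅ x : Set.Ioi (0:ℝ), sigmaFn A D ↑x) atTop

/-- `𝓦^uni = {A ∈ 𝓜 : L(A) = U(A)}`. -/
def Wuni : Set (Set ℝ) := {A | A ∈ Mcal ∧ Lfn A = Ufn A}

/-- `log(A) = {log a : a ∈ A ∩ [1,∞)}`. -/
def logSet (A : Set ℝ) : Set ℝ := Real.log '' (A ∩ Set.Ici 1)

/-- `𝓐^uni = {A ∈ 𝓜 : log(A) ∈ 𝓦^uni}`. -/
def Auni : Set (Set ℝ) := {A | A ∈ Mcal ∧ logSet A ∈ Wuni}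

/-- `α(A) = λ(log(A))`. -/
def alphaFn (A : Set ℝ) : ℝ := lam (logSet A)

/-- `ξ_A(D,x) = (1/log D) ∫_x^{Dx} ρ_A(y)/y dy`. -/
def xi (A : Set ℝ) (D x : ℝ) : ℝ :=
  (1 / Real.log D) * ∫ y in x..(D * x), rho A y / y

/-- Membership in `𝓟`: `s` is a sequence in `(1,∞)` tending to `∞` and `f` is a
sequence in `(1,∞)`. -/
def memP (s f : ℕ → ℝ) : Prop :=
  (∀ n, 1 < s n) ∧ Tendsto s atTop atTop ∧ ∀ n, 1 < f n

/-- `𝓐^{s,f} = {A ∈ 𝓜 : lim_n ξ_A(s_n,f_n) exists}`. -/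
def Asf (s f : ℕ → ℝ) : Set (Set ℝ) :=
  {A | A ∈ Mcal ∧ ∃ l : ℝ, Tendsto (fun n => xi A (s n) (f n)) atTop (𝓝 l)}

/-- `α^{s,f}(A) = lim_n ξ_A(s_n,f_n)`. -/
def alphasf (s f : ℕ → ℝ) (A : Set ℝ) : ℝ :=
  limUnder atTop fun n => xi A (s n) (f n)

/-- `τ_A(C,j)`; here `j : ℕ` starting from `0` corresponds to the interval
`[C^j, C^{j+1})`, i.e. to the paper's `τ_A(C, j+1)`. -/
def tau (A : Set ℝ) (C : ℝ) (j : ℕ) : ℝ :=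
  (1 / (C ^ j * (C - 1))) * ∫ y in (C ^ j : ℝ)..(C ^ (j + 1)), ind A y

/-- `U^*(C,A) = limsup_{n→∞} sup_k (1/n) Σ_{j=k}^{k+n-1} τ_A(C,j)`. -/
def Ustar (C : ℝ) (A : Set ℝ) : ℝ :=
  limsup (fun n : ℕ => ⨆ k : ℕ, (1 / (n : ℝ)) * ∑ i ∈ Finset.range n, tau A C (k + i)) atTop


/-!
On the logarithmic scale `A = ⋃ [e^{2n}, e^{2n+1})` becomes `B = ⋃ [2n, 2n+1)`, and
`|m(B ∩ [0, t)) - t / 2| ≤ 1`, so `m(B ∩ [x, y)) = (y - x) / 2 + O(1)` uniformly in `x`. Such a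
uniform density gives both `ρ_B → 1/2` and `L(B) = U(B) = 1/2`. On the other hand `A` contains
`[t, e t)` for `t = e^{2n}` and misses it for `t = e^{2n+1}`, whereas `ρ_A → l` would force the
proportion of `[t, e t)` covered by `A` to tend to `l`.

For `𝓒 ⊆ 𝓐^uni`: if `ρ_C → l`, then on `[e^s, e^{s+δ}]` the derivative of `log` lies between
`e^{-s-δ}` and `e^{-s}`, so `m(log C ∩ [s, s + δ)) = l δ + O(δ² + η)` for all large `s`, with `η`
as small as we like; adding up consecutive windows of length `δ` gives `log C` the uniform
density `l`.
-/

lemma measurableSet_of_mem_Mcal {E : Set ℝ} (hE : E ∈ Mcal) : MeasurableSet E := by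
  obtain ⟨a, -, -, rfl⟩ := hE
  exact .iUnion fun _ => measurableSet_Ico

section Sfn

variable {E : Set ℝ}

lemma Sfn_zero (E : Set ℝ) : Sfn E 0 = 0 := by simp [Sfn]

lemma volume_inter_Ico_ne_top (E : Set ℝ) (a b : ℝ) : volume (E ∩ Ico a b) ≠ ⊤ :=
  ne_top_of_le_ne_top (by simp [Real.volume_Ico]) (measure_mono inter_subset_right)

lemma Sfn_sub_Sfn (hE : MeasurableSet E) {a b : ℝ} (ha : 0 ≤ a) (hab : a ≤ b) :
    Sfn E b - Sfn E a = (volume (E ∩ Ico a b)).toReal := by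
  rw [Sfn, Sfn, sub_eq_iff_eq_add', ← ENNReal.toReal_add (volume_inter_Ico_ne_top E 0 a)
    (volume_inter_Ico_ne_top E a b), ← measure_union ?_ (hE.inter measurableSet_Ico),
    ← inter_union_distrib_left, Ico_union_Ico_eq_Ico ha hab]
  exact Ico_disjoint_Ico_same.mono inter_subset_right inter_subset_right

lemma Sfn_mono (E : Set ℝ) : Monotone (Sfn E) := fun _ y hxy =>
  ENNReal.toReal_mono (volume_inter_Ico_ne_top E 0 y)
    (measure_mono (inter_subset_inter_right _ (Ico_subset_Ico_right hxy)))

lemma Sfn_sub_Sfn_le (hE : MeasurableSet E) {x y : ℝ} (hx : 0 ≤ x) (hxy : x ≤ y) :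
    Sfn E y - Sfn E x ≤ y - x := by
  rw [Sfn_sub_Sfn hE hx hxy, ← sub_nonneg.2 hxy |> ENNReal.toReal_ofReal, ← Real.volume_Ico]
  exact ENNReal.toReal_mono (by simp) (measure_mono inter_subset_right)

lemma abs_Sfn_sub_Sfn_le (hE : MeasurableSet E) {x y : ℝ} (hx : 0 ≤ x) (hxy : x ≤ y) :
    |Sfn E y - Sfn E x| ≤ y - x :=
  abs_le.2 ⟨by linarith [Sfn_mono E hxy], Sfn_sub_Sfn_le hE hx hxy⟩

lemma integral_ind (hE : MeasurableSet E) {a b : ℝ} (ha : 0 ≤ a) (hab : a ≤ b) :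
    ∫ y in a..b, ind E y = Sfn E b - Sfn E a := by
  rw [intervalIntegral.integral_of_le hab, ind, setIntegral_indicator hE, setIntegral_const,
    Sfn_sub_Sfn hE ha hab, measureReal_def, inter_comm,
    measure_congr ((ae_eq_refl E).inter Ico_ae_eq_Ioc).symm]
  simp

lemma rho_eq_Sfn_div (hE : MeasurableSet E) {x : ℝ} (hx : 0 < x) : rho E x = Sfn E x / x := by
  rw [rho, if_neg hx.ne', integral_ind hE le_rfl hx.le, Sfn_zero]
  ring

lemma sigmaFn_eq_Sfn_sub_div (hE : MeasurableSet E) (D : ℝ) {x : ℝ} (hx : 0 ≤ x) (hD : 0 ≤ D) :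
    sigmaFn E D x = (Sfn E (x + D) - Sfn E x) / D := by
  rw [sigmaFn, integral_ind hE hx (by linarith)]
  ring

end Sfn

lemma tendsto_ciSup_ciInf_of_forall_abs_sub_le {α ι : Type*} [Nonempty ι] {l : Filter α}
    {f : α → ι → ℝ} {c : ℝ} (h : ∀ ε > 0, ∀ᶠ D in l, ∀ i, |f D i - c| ≤ ε) :
    Tendsto (fun D => ⨆ i, f D i) l (𝓝 c) ∧ Tendsto (fun D => ⨅ i, f D i) l (𝓝 c) := by
  have hbounds : ∀ ε > 0, ∀ᶠ D in l, |(⨆ i, f D i) - c| ≤ ε ∧ |(⨅ i, f D i) - c| ≤ ε := by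
    intro ε hε
    filter_upwards [h ε hε] with D hD
    simp only [abs_le] at hD ⊢
    obtain ⟨i⟩ := ‹Nonempty ι›
    have hsup : (⨆ j, f D j) ≤ c + ε := ciSup_le fun j => by linarith [hD j]
    have hinf : c - ε ≤ ⨅ j, f D j := le_ciInf fun j => by linarith [hD j]
    have hi_sup := le_ciSup (f := f D) ⟨c + ε, forall_mem_range.2 fun j => by linarith [hD j]⟩ i
    have hinf_i := ciInf_le (f := f D) ⟨c - ε, forall_mem_range.2 fun j => by linarith [hD j]⟩ i
    exact ⟨⟨by linarith [hD i], by linarith⟩, ⟨by linarith, by linarith [hD i]⟩⟩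
  refine ⟨Metric.tendsto_nhds.2 fun ε hε => ?_, Metric.tendsto_nhds.2 fun ε hε => ?_⟩ <;>
    filter_upwards [hbounds (ε / 2) (half_pos hε)] with D hD <;>
    rw [Real.dist_eq] <;>
    linarith [hD.1, hD.2]

def HasUniformDensity (E : Set ℝ) (l : ℝ) : Prop :=
  ∀ ε > 0, ∃ M, ∀ x y, 0 ≤ x → x ≤ y → |Sfn E y - Sfn E x - l * (y - x)| ≤ ε * (y - x) + M

namespace HasUniformDensity

variable {E : Set ℝ} {l : ℝ}

lemma tendsto_rho (hE : MeasurableSet E) (h : HasUniformDensity E l) :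
    Tendsto (rho E) atTop (𝓝 l) := by
  refine Metric.tendsto_atTop.2 fun ε hε => ?_
  obtain ⟨M, hM⟩ := h (ε / 2) (half_pos hε)
  refine ⟨max 1 (2 * M / ε + 1), fun x hx => ?_⟩
  have hx0 : 0 < x := by linarith [le_max_left 1 (2 * M / ε + 1)]
  have hMx : M < ε / 2 * x := by
    have := (div_lt_iff₀ hε).1 (lt_of_lt_of_le (lt_add_one _) (le_of_max_le_right hx))
    linarith
  have hbound := hM 0 x le_rfl hx0.le
  rw [Sfn_zero, sub_zero, sub_zero] at hbound
  rw [Real.dist_eq, rho_eq_Sfn_div hE hx0, div_sub' hx0.ne', abs_div, abs_of_pos hx0,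
    div_lt_iff₀ hx0, mul_comm x l]
  linarith

lemma lfn_eq_ufn (hE : MeasurableSet E) (h : HasUniformDensity E l) : Lfn E = Ufn E := by
  have : Nonempty (Ioi (0 : ℝ)) := ⟨⟨1, mem_Ioi.2 one_pos⟩⟩
  obtain ⟨hsup, hinf⟩ := tendsto_ciSup_ciInf_of_forall_abs_sub_le
    (f := fun D (x : Ioi (0 : ℝ)) => sigmaFn E D x) (l := atTop) (c := l) fun ε hε => by
      obtain ⟨M, hM⟩ := h (ε / 2) (half_pos hε)
      filter_upwards [eventually_gt_atTop 0, eventually_ge_atTop (2 * M / ε)] with D hD hMD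
      intro x
      have hbound := hM x (x + D) (le_of_lt x.2) (by linarith)
      rw [add_sub_cancel_left] at hbound
      rw [sigmaFn_eq_Sfn_sub_div hE D (le_of_lt x.2) hD.le, div_sub' hD.ne', abs_div,
        abs_of_pos hD, div_le_iff₀ hD, mul_comm D l]
      have := (div_le_iff₀ hε).1 hMD
      linarith
  rw [Lfn, Ufn, hinf.liminf_eq, hsup.limsup_eq]

end HasUniformDensity

section Step

variable {E : Set ℝ} {l : ℝ}

lemma abs_Sfn_sub_Sfn_sub_mul_le (hE : MeasurableSet E) {x y : ℝ} (hx : 0 ≤ x) (hxy : x ≤ y) :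
    |Sfn E y - Sfn E x - l * (y - x)| ≤ (1 + |l|) * (y - x) := by
  calc |Sfn E y - Sfn E x - l * (y - x)| ≤ |Sfn E y - Sfn E x| + |l * (y - x)| := abs_sub _ _
    _ ≤ (y - x) + |l| * (y - x) := by
      rw [abs_mul, abs_of_nonneg (sub_nonneg.2 hxy)]
      gcongr
      exact abs_Sfn_sub_Sfn_le hE hx hxy
    _ = (1 + |l|) * (y - x) := by ring

lemma abs_Sfn_add_natCast_mul_sub_le {δ ε s₀ : ℝ}
    (hstep : ∀ s ≥ s₀, |Sfn E (s + δ) - Sfn E s - l * δ| ≤ ε * δ) {s : ℝ} (hs : s₀ ≤ s)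
    (hδ : 0 ≤ δ) (n : ℕ) : |Sfn E (s + n * δ) - Sfn E s - l * (n * δ)| ≤ ε * (n * δ) := by
  induction n with
  | zero => simp
  | succ n ih =>
    have hnext := hstep (s + n * δ) (by nlinarith [n.cast_nonneg (α := ℝ)])
    calc |Sfn E (s + ↑(n + 1) * δ) - Sfn E s - l * (↑(n + 1) * δ)|
        = |(Sfn E (s + n * δ) - Sfn E s - l * (n * δ)) +
            (Sfn E (s + n * δ + δ) - Sfn E (s + n * δ) - l * δ)| := by push_cast; ring_nf
      _ ≤ ε * (n * δ) + ε * δ := (abs_add_le _ _).trans (add_le_add ih hnext)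
      _ = ε * (↑(n + 1) * δ) := by push_cast; ring

/-- Steps of a fixed length `δ` far out suffice: the remaining pieces near `x` and near `y` have
bounded length. -/
lemma hasUniformDensity_of_step (hE : MeasurableSet E)
    (h : ∀ ε > 0, ∃ δ > 0, ∃ s₀ ≥ 0, ∀ s ≥ s₀, |Sfn E (s + δ) - Sfn E s - l * δ| ≤ ε * δ) :
    HasUniformDensity E l := by
  intro ε hε
  obtain ⟨δ, hδ, s₀, hs₀, hstep⟩ := h ε hε
  refine ⟨(1 + |l|) * (s₀ + δ), fun x y hx hxy => ?_⟩
  have hl : 0 ≤ 1 + |l| := by positivity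
  by_cases hy : y ≤ x + s₀
  · have := abs_Sfn_sub_Sfn_sub_mul_le (l := l) hE hx hxy
    nlinarith
  set n := ⌊(y - (x + s₀)) / δ⌋₊
  have hn : n * δ ≤ y - (x + s₀) :=
    (le_div_iff₀ hδ).1 (Nat.floor_le (div_nonneg (by linarith) hδ.le))
  have hn' : y - (x + s₀) < n * δ + δ := by
    have := (div_lt_iff₀ hδ).1 (Nat.lt_floor_add_one ((y - (x + s₀)) / δ))
    linarith
  have hleft := abs_Sfn_sub_Sfn_sub_mul_le (l := l) hE hx (le_add_of_nonneg_right hs₀)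
  have hmid := abs_Sfn_add_natCast_mul_sub_le hstep (le_add_of_nonneg_left hx : s₀ ≤ x + s₀) hδ.le n
  have hright := abs_Sfn_sub_Sfn_sub_mul_le (l := l) hE (by positivity)
    (by linarith : x + s₀ + n * δ ≤ y)
  have hsplit : Sfn E y - Sfn E x - l * (y - x) =
      (Sfn E (x + s₀) - Sfn E x - l * (x + s₀ - x)) +
      (Sfn E (x + s₀ + n * δ) - Sfn E (x + s₀) - l * (n * δ)) +
      (Sfn E y - Sfn E (x + s₀ + n * δ) - l * (y - (x + s₀ + n * δ))) := by ring
  rw [hsplit]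
  refine (abs_add_three _ _ _).trans ?_
  have h1 : (1 + |l|) * (x + s₀ - x) = (1 + |l|) * s₀ := by ring
  have h2 : (1 + |l|) * (y - (x + s₀ + n * δ)) ≤ (1 + |l|) * δ :=
    mul_le_mul_of_nonneg_left (by linarith) hl
  have h3 : ε * (n * δ) ≤ ε * (y - x) := mul_le_mul_of_nonneg_left (by linarith) hε.le
  linarith

end Step

/-- The sets of `𝓜` are exactly the `altUnion a` with `a` monotone and `0 ≤ a 0`. -/
def altUnion (a : ℕ → ℝ) : Set ℝ := ⋃ i : ℕ, Ico (a (2 * i)) (a (2 * i + 1))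

section AltUnion

variable {a : ℕ → ℝ}

lemma altUnion_mem_Mcal (h0 : 0 ≤ a 0) (ha : Monotone a) : altUnion a ∈ Mcal :=
  ⟨a, h0, ha, rfl⟩

lemma measurableSet_altUnion (a : ℕ → ℝ) : MeasurableSet (altUnion a) :=
  .iUnion fun _ => measurableSet_Ico

lemma altUnion_inter_Ico_zero (ha : Monotone a) : altUnion a ∩ Ico 0 (a 0) = ∅ := by
  refine eq_empty_of_forall_notMem fun x ⟨hx, hx0⟩ => ?_
  obtain ⟨i, hi, -⟩ := mem_iUnion.1 hx
  exact (ha (Nat.zero_le _)).trans hi |>.not_gt hx0.2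

lemma altUnion_inter_Ico_even (n : ℕ) :
    altUnion a ∩ Ico (a (2 * n)) (a (2 * n + 1)) = Ico (a (2 * n)) (a (2 * n + 1)) :=
  inter_eq_right.2 (subset_iUnion_of_subset n subset_rfl)

lemma altUnion_inter_Ico_odd (ha : Monotone a) (n : ℕ) :
    altUnion a ∩ Ico (a (2 * n + 1)) (a (2 * n + 2)) = ∅ := by
  refine eq_empty_of_forall_notMem fun x ⟨hx, hxn⟩ => ?_
  obtain ⟨i, hi⟩ := mem_iUnion.1 hx
  rcases le_or_gt i n with hin | hin
  · exact (ha (by omega : 2 * i + 1 ≤ 2 * n + 1)).trans hxn.1 |>.not_gt hi.2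
  · exact (ha (by omega : 2 * n + 2 ≤ 2 * i)).trans hi.1 |>.not_gt hxn.2

variable (h0 : 0 ≤ a 0) (ha : Monotone a)
include h0 ha

lemma Sfn_altUnion_odd_sub_even (n : ℕ) :
    Sfn (altUnion a) (a (2 * n + 1)) - Sfn (altUnion a) (a (2 * n)) =
      a (2 * n + 1) - a (2 * n) := by
  have hle : a (2 * n) ≤ a (2 * n + 1) := ha (Nat.le_succ _)
  rw [Sfn_sub_Sfn (measurableSet_altUnion a) (h0.trans (ha (Nat.zero_le _))) hle,
    altUnion_inter_Ico_even, Real.volume_Ico, ENNReal.toReal_ofReal (sub_nonneg.2 hle)]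

lemma Sfn_altUnion_even_succ (n : ℕ) :
    Sfn (altUnion a) (a (2 * n + 2)) = Sfn (altUnion a) (a (2 * n + 1)) := by
  rw [← sub_eq_zero, Sfn_sub_Sfn (measurableSet_altUnion a) (h0.trans (ha (Nat.zero_le _)))
    (ha (Nat.le_succ _)), altUnion_inter_Ico_odd ha]
  simp

lemma Sfn_altUnion_even (n : ℕ) :
    Sfn (altUnion a) (a (2 * n)) = ∑ k ∈ Finset.range n, (a (2 * k + 1) - a (2 * k)) := by
  induction n with
  | zero =>
    simpa [Sfn_zero, altUnion_inter_Ico_zero ha] using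
      Sfn_sub_Sfn (measurableSet_altUnion a) le_rfl h0
  | succ n ih =>
    rw [Finset.sum_range_succ, ← ih, ← Sfn_altUnion_odd_sub_even h0 ha,
      ← Sfn_altUnion_even_succ h0 ha]
    ring_nf

end AltUnion

section Log

open Real

lemma altUnion_inter_Ici (a : ℕ → ℝ) (c : ℝ) :
    altUnion a ∩ Ici c = altUnion fun m => max (a m) c := by
  rw [altUnion, iUnion_inter]
  refine iUnion_congr fun i => ext fun x => ?_
  simp only [mem_inter_iff, mem_Ico, mem_Ici, max_le_iff, lt_max_iff]
  constructor
  · rintro ⟨⟨h1, h2⟩, h3⟩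
    exact ⟨⟨h1, h3⟩, .inl h2⟩
  · rintro ⟨⟨h1, h3⟩, h2 | h2⟩
    exacts [⟨⟨h1, h2⟩, h3⟩, absurd h3 h2.not_ge]

lemma logSet_altUnion {a : ℕ → ℝ} (ha : Monotone a) :
    logSet (altUnion a) = altUnion fun m => log (max (a m) 1) := by
  rw [logSet, altUnion_inter_Ici, altUnion, image_iUnion]
  exact iUnion_congr fun i => image_log_Ico (by positivity) (max_le_max_right 1 (ha (by omega)))

lemma logSet_mem_Mcal {C : Set ℝ} (hC : C ∈ Mcal) : logSet C ∈ Mcal := by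
  obtain ⟨a, -, ha, rfl⟩ := hC
  rw [← altUnion, logSet_altUnion ha]
  exact altUnion_mem_Mcal (log_nonneg (le_max_right _ _))
    fun m n hmn => log_le_log (by positivity) (max_le_max_right 1 (ha hmn))

lemma measurableSet_logSet {C : Set ℝ} (hC : MeasurableSet C) : MeasurableSet (logSet C) :=
  (hC.inter measurableSet_Ici).image_of_continuousOn_injOn
    (continuousOn_log.mono fun _ hx => (zero_lt_one.trans_le hx.2).ne')
    (log_injOn_pos.mono fun _ hx => mem_Ioi.2 (zero_lt_one.trans_le hx.2))

lemma logSet_inter_Ico (C : Set ℝ) {u : ℝ} (hu : 0 ≤ u) (v : ℝ) :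
    logSet C ∩ Ico u v = log '' (C ∩ Ico (exp u) (exp v)) := by
  have h1u : 1 ≤ exp u := one_le_exp hu
  rw [logSet, ← image_inter_preimage]
  congr 1
  ext x
  simp only [mem_inter_iff, mem_Ici, mem_preimage, mem_Ico]
  constructor
  · rintro ⟨⟨hxC, hx1⟩, hu, hv⟩
    have hx0 : 0 < x := zero_lt_one.trans_le hx1
    exact ⟨hxC, (le_log_iff_exp_le hx0).1 hu, (log_lt_iff_lt_exp hx0).1 hv⟩
  · rintro ⟨hxC, hu, hv⟩
    have hx0 : 0 < x := (exp_pos _).trans_le hu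
    exact ⟨⟨hxC, h1u.trans hu⟩, (le_log_iff_exp_le hx0).2 hu, (log_lt_iff_lt_exp hx0).2 hv⟩

lemma volume_log_image {s : Set ℝ} (hs : MeasurableSet s) (hpos : s ⊆ Ioi 0) :
    volume (log '' s) = ∫⁻ x in s, ENNReal.ofReal x⁻¹ := by
  have := lintegral_image_eq_lintegral_abs_deriv_mul hs
    (fun x hx => (hasDerivAt_log (hpos hx).ne').hasDerivWithinAt) (log_injOn_pos.mono hpos) 1
  simp only [Pi.one_apply, lintegral_const, Measure.restrict_apply_univ, one_mul, mul_one] at this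
  rw [this]
  exact setLIntegral_congr_fun hs fun x hx => by rw [abs_of_pos (inv_pos.2 (hpos hx))]

/-- Since `log' = x⁻¹`, `log` shrinks lengths in `[exp u, exp v]` by a factor between
`exp (-v)` and `exp (-u)`. -/
lemma Sfn_logSet_sub_Sfn_logSet_mem_Icc {C : Set ℝ} (hC : MeasurableSet C) {u v : ℝ}
    (hu : 0 ≤ u) (huv : u ≤ v) :
    Sfn (logSet C) v - Sfn (logSet C) u ∈
      Icc (exp (-v) * (Sfn C (exp v) - Sfn C (exp u)))
        (exp (-u) * (Sfn C (exp v) - Sfn C (exp u))) := by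
  set s := C ∩ Ico (exp u) (exp v)
  have hs : MeasurableSet s := hC.inter measurableSet_Ico
  have hpos : s ⊆ Ioi 0 := fun x hx => (exp_pos u).trans_le hx.2.1
  rw [Sfn_sub_Sfn (measurableSet_logSet hC) hu huv, logSet_inter_Ico C hu,
    Sfn_sub_Sfn hC (exp_pos u).le (exp_le_exp.2 huv), volume_log_image hs hpos]
  have hfin : volume s ≠ ⊤ := volume_inter_Ico_ne_top C _ _
  have hlo : ENNReal.ofReal (exp (-v)) * volume s ≤ ∫⁻ x in s, ENNReal.ofReal x⁻¹ := by
    rw [← setLIntegral_const]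
    refine setLIntegral_mono' hs fun x hx => ENNReal.ofReal_le_ofReal ?_
    rw [exp_neg]
    exact inv_anti₀ (hpos hx) hx.2.2.le
  have hup : ∫⁻ x in s, ENNReal.ofReal x⁻¹ ≤ ENNReal.ofReal (exp (-u)) * volume s := by
    rw [← setLIntegral_const]
    refine setLIntegral_mono' hs fun x hx => ENNReal.ofReal_le_ofReal ?_
    rw [exp_neg]
    exact inv_anti₀ (exp_pos u) hx.2.1
  have hfin' : ∫⁻ x in s, ENNReal.ofReal x⁻¹ ≠ ⊤ :=
    ne_top_of_le_ne_top (ENNReal.mul_ne_top ENNReal.ofReal_ne_top hfin) hup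
  constructor
  · simpa [ENNReal.toReal_mul, (exp_pos _).le] using ENNReal.toReal_mono hfin' hlo
  · simpa [ENNReal.toReal_mul, (exp_pos _).le] using
      ENNReal.toReal_mono (ENNReal.mul_ne_top ENNReal.ofReal_ne_top hfin) hup

end Log

section Density

open Real

variable {C : Set ℝ} {l : ℝ}

lemma abs_le_one_of_tendsto_rho (hC : MeasurableSet C) (hl : Tendsto (rho C) atTop (𝓝 l)) :
    |l| ≤ 1 := by
  refine le_of_tendsto hl.abs ?_
  filter_upwards [eventually_gt_atTop 0] with x hx
  rw [rho_eq_Sfn_div hC hx, abs_div, abs_of_pos hx, div_le_one hx]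
  simpa [Sfn_zero] using abs_Sfn_sub_Sfn_le hC le_rfl hx.le

lemma exists_abs_Sfn_sub_mul_le (hC : MeasurableSet C) (hl : Tendsto (rho C) atTop (𝓝 l))
    {η : ℝ} (hη : 0 < η) : ∃ T, ∀ t ≥ T, |Sfn C t - l * t| ≤ η * t := by
  refine Eventually.exists_forall_of_atTop ?_
  filter_upwards [eventually_gt_atTop 0, hl.eventually (Metric.closedBall_mem_nhds l hη)]
    with t ht hdist
  rw [Real.dist_eq, rho_eq_Sfn_div hC ht,
    div_sub' ht.ne', abs_div, abs_of_pos ht, div_le_iff₀ ht, mul_comm t l] at hdist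
  exact hdist

/-- With `t = exp s` and `q = exp δ`, the measure of `C ∩ [t, t q)` is `t (l (q - 1) + r)` with
`|r| ≤ 4 η`; `log` divides it by a factor between `t` and `t q`, and `q - 1`, `1 - q⁻¹` are both
`δ + O(δ²)`. -/
lemma abs_Sfn_logSet_add_sub_le (hC : MeasurableSet C) (hl : |l| ≤ 1) {η T : ℝ} (hη : 0 ≤ η)
    (hT : ∀ t ≥ T, |Sfn C t - l * t| ≤ η * t) {s δ : ℝ} (hs : 0 ≤ s) (hTs : T ≤ exp s)
    (hδ : 0 ≤ δ) (hδ1 : δ ≤ 1) :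
    |Sfn (logSet C) (s + δ) - Sfn (logSet C) s - l * δ| ≤ δ ^ 2 + 4 * η := by
  obtain ⟨hlo, hup⟩ := Sfn_logSet_sub_Sfn_logSet_mem_Icc hC hs (le_add_of_nonneg_right hδ)
  simp only [exp_neg, exp_add] at hlo hup
  set t := exp s
  set q := exp δ
  have ht : 0 < t := exp_pos s
  have hq1 : 1 ≤ q := one_le_exp hδ
  have hq3 : q ≤ 3 := (exp_le_exp.2 hδ1).trans (exp_one_lt_d9.le.trans (by norm_num))
  have hq0 : 0 < q := zero_lt_one.trans_le hq1
  set r := (Sfn C (t * q) - Sfn C t - l * (t * q - t)) / t with hr_def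
  have hr : |r| ≤ 4 * η := by
    have hsum : |Sfn C (t * q) - Sfn C t - l * (t * q - t)| ≤ η * (t * q) + η * t := by
      have h1 := hT (t * q) (hTs.trans (le_mul_of_one_le_right ht.le hq1))
      have h2 := hT t hTs
      calc _ = |(Sfn C (t * q) - l * (t * q)) - (Sfn C t - l * t)| := by ring_nf
        _ ≤ _ := (abs_sub _ _).trans (add_le_add h1 h2)
    have hq3' : η * (t * q) ≤ η * (t * 3) := by gcongr
    rw [abs_div, abs_of_pos ht, div_le_iff₀ ht]
    linarith
  have hΔ : t⁻¹ * (Sfn C (t * q) - Sfn C t) = l * (q - 1) + r := by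
    rw [hr_def]
    field_simp
    ring
  have hΔq : (t * q)⁻¹ * (Sfn C (t * q) - Sfn C t) = l * (1 - q⁻¹) + r * q⁻¹ := by
    rw [mul_inv, mul_comm t⁻¹, mul_assoc, hΔ]
    field_simp
  rw [hΔ] at hup
  rw [hΔq] at hlo
  have hexp : |q - 1 - δ| ≤ δ ^ 2 := abs_exp_sub_one_sub_id_le (by rwa [abs_of_nonneg hδ])
  have hexp' : |q⁻¹ - 1 + δ| ≤ δ ^ 2 := by
    simpa [exp_neg, sub_neg_eq_add] using
      abs_exp_sub_one_sub_id_le (x := -δ) (by rwa [abs_neg, abs_of_nonneg hδ])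
  have h1 : |l * (q - 1 - δ)| ≤ δ ^ 2 := by
    rw [abs_mul]; exact (mul_le_of_le_one_left (abs_nonneg _) hl).trans hexp
  have h2 : |l * (q⁻¹ - 1 + δ)| ≤ δ ^ 2 := by
    rw [abs_mul]; exact (mul_le_of_le_one_left (abs_nonneg _) hl).trans hexp'
  have h3 : |r * q⁻¹| ≤ 4 * η := by
    rw [abs_mul, abs_of_pos (inv_pos.2 hq0)]
    exact mul_le_of_le_one_right (abs_nonneg r) (inv_le_one_of_one_le₀ hq1) |>.trans hr
  rw [abs_le] at h1 h2 h3 hr ⊢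
  constructor <;> linarith

lemma tendsto_Sfn_mul_sub_Sfn_div (hC : MeasurableSet C)
    (hl : Tendsto (rho C) atTop (𝓝 l)) {c : ℝ} (hc : 0 < c) :
    Tendsto (fun t => (Sfn C (c * t) - Sfn C t) / t) atTop (𝓝 ((c - 1) * l)) := by
  have hlim : Tendsto (fun t => c * rho C (c * t) - rho C t) atTop (𝓝 (c * l - l)) :=
    ((hl.comp (tendsto_id.const_mul_atTop hc)).const_mul c).sub hl
  rw [sub_one_mul]
  refine hlim.congr' ?_
  filter_upwards [eventually_gt_atTop 0] with t ht
  rw [rho_eq_Sfn_div hC (mul_pos hc ht), rho_eq_Sfn_div hC ht]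
  field_simp

lemma hasUniformDensity_logSet (hC : MeasurableSet C) (hl : Tendsto (rho C) atTop (𝓝 l)) :
    HasUniformDensity (logSet C) l := by
  refine hasUniformDensity_of_step (measurableSet_logSet hC) fun ε hε => ?_
  set δ := min 1 (ε / 2)
  have hδ : 0 < δ := lt_min one_pos (half_pos hε)
  obtain ⟨T, hT⟩ := exists_abs_Sfn_sub_mul_le hC hl (by positivity : 0 < ε * δ / 8)
  refine ⟨δ, hδ, max 0 (log T), le_max_left _ _, fun s hs => ?_⟩
  have hTs : T ≤ exp s := (le_exp_log T).trans (exp_le_exp.2 ((le_max_right _ _).trans hs))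
  refine (abs_Sfn_logSet_add_sub_le hC (abs_le_one_of_tendsto_rho hC hl) (by positivity) hT
    ((le_max_left _ _).trans hs) hTs hδ.le (min_le_left _ _)).trans ?_
  have : δ ^ 2 ≤ ε / 2 * δ := by rw [sq]; gcongr; exact min_le_right _ _
  linarith

end Density

lemma Ccal_subset_Auni : Ccal ⊆ Auni := by
  rintro C ⟨hCM, l, hl⟩
  have hC := measurableSet_of_mem_Mcal hCM
  exact ⟨hCM, logSet_mem_Mcal hCM,
    (hasUniformDensity_logSet hC hl).lfn_eq_ufn (measurableSet_logSet hC)⟩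

section Example

open Real

lemma monotone_exp_natCast : Monotone fun m : ℕ => exp m :=
  fun _ _ h => exp_le_exp.2 (Nat.cast_le.2 h)

lemma iUnion_Ico_exp_eq_altUnion :
    (⋃ n : ℕ, Ico (exp (2 * n)) (exp (2 * n + 1))) = altUnion fun m => exp m :=
  iUnion_congr fun n => by push_cast; rfl

lemma logSet_altUnion_exp : logSet (altUnion fun m => exp m) = altUnion fun m => (m : ℝ) := by
  rw [logSet_altUnion monotone_exp_natCast]
  congr with m
  rw [max_eq_left (one_le_exp m.cast_nonneg), log_exp]

lemma abs_Sfn_altUnion_natCast_sub_half_le {t : ℝ} (ht : 0 ≤ t) :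
    |Sfn (altUnion fun m => (m : ℝ)) t - t / 2| ≤ 1 := by
  have hmono : Monotone fun m : ℕ => (m : ℝ) := Nat.mono_cast
  have heven (n : ℕ) : Sfn (altUnion fun m => (m : ℝ)) (2 * n) = n := by
    simpa using Sfn_altUnion_even (a := fun m => (m : ℝ)) Nat.cast_zero.ge hmono n
  set n := ⌊t / 2⌋₊
  have h1 : (n : ℝ) ≤ t / 2 := Nat.floor_le (by positivity)
  have h2 : t / 2 < n + 1 := Nat.lt_floor_add_one _
  have hlo := Sfn_mono (altUnion fun m => (m : ℝ)) (by linarith : 2 * (n : ℝ) ≤ t)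
  have hhi := Sfn_mono (altUnion fun m => (m : ℝ))
    (by push_cast; linarith : t ≤ 2 * ((n + 1 : ℕ) : ℝ))
  rw [heven] at hlo hhi
  push_cast at hhi
  rw [abs_le]
  constructor <;> linarith

lemma hasUniformDensity_altUnion_natCast :
    HasUniformDensity (altUnion fun m => (m : ℝ)) (1 / 2) := by
  refine fun ε hε => ⟨2, fun x y hx hxy => ?_⟩
  have hSx := abs_le.1 (abs_Sfn_altUnion_natCast_sub_half_le hx)
  have hSy := abs_le.1 (abs_Sfn_altUnion_natCast_sub_half_le (hx.trans hxy))
  have : 0 ≤ ε * (y - x) := mul_nonneg hε.le (sub_nonneg.2 hxy)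
  rw [abs_le]
  constructor <;> linarith

/-- The density of `A` over `[t, e t)` is `1` at `t = e^{2n}` but `0` at `t = e^{2n+1}`. -/
lemma not_tendsto_rho_altUnion_exp :
    ¬ ∃ l : ℝ, Tendsto (rho (altUnion fun m => exp m)) atTop (𝓝 l) := by
  rintro ⟨l, hl⟩
  have hlim := tendsto_Sfn_mul_sub_Sfn_div (measurableSet_altUnion _) hl (exp_pos 1)
  have hexp : Tendsto (fun m : ℕ => exp m) atTop atTop :=
    tendsto_exp_atTop.comp tendsto_natCast_atTop_atTop
  have heven : Tendsto (fun n : ℕ => 2 * n) atTop atTop :=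
    tendsto_atTop_atTop.2 fun b => ⟨b, fun n hn => by omega⟩
  have hodd : Tendsto (fun n : ℕ => 2 * n + 1) atTop atTop :=
    tendsto_atTop_atTop.2 fun b => ⟨b, fun n hn => by omega⟩
  have hstep (m : ℕ) : exp 1 * exp (m : ℝ) = exp ((m + 1 : ℕ) : ℝ) := by
    rw [← exp_add]; push_cast; ring_nf
  have hfull : (exp 1 - 1) * l = exp 1 - 1 := by
    refine tendsto_nhds_unique (hlim.comp (hexp.comp heven)) (tendsto_const_nhds.congr fun n => ?_)
    simp only [Function.comp_apply, hstep]
    rw [Sfn_altUnion_odd_sub_even (exp_pos _).le monotone_exp_natCast, ← hstep]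
    field_simp
  have hempty : (exp 1 - 1) * l = 0 := by
    refine tendsto_nhds_unique (hlim.comp (hexp.comp hodd)) (tendsto_const_nhds.congr fun n => ?_)
    simp only [Function.comp_apply, hstep]
    rw [Sfn_altUnion_even_succ (exp_pos _).le monotone_exp_natCast, sub_self, zero_div]
  have : exp 1 - 1 ≠ 0 := sub_ne_zero.2 (one_lt_exp_iff.2 one_pos).ne'
  exact this (hfull.symm.trans hempty)

end Example

/-- The set `A = ⋃ₙ [e^{2n}, e^{2n+1})` belongs to `𝓐^uni` with `α(A) = 1/2`
(indeed `ρ_{log A}(x) → 1/2`), but `ρ_A` does not converge, so `A ∉ 𝓒`.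
Hence `𝓒` is a proper subset of `𝓐^uni`. -/
theorem stmt19 :
    (⋃ n : ℕ, Set.Ico (Real.exp (2 * n)) (Real.exp (2 * n + 1))) ∈ Auni ∧
    Tendsto (rho (logSet (⋃ n : ℕ, Set.Ico (Real.exp (2 * n)) (Real.exp (2 * n + 1)))))
      atTop (𝓝 (1/2)) ∧
    alphaFn (⋃ n : ℕ, Set.Ico (Real.exp (2 * n)) (Real.exp (2 * n + 1))) = 1/2 ∧
    ¬ (∃ l : ℝ, Tendsto (rho (⋃ n : ℕ, Set.Ico (Real.exp (2 * n)) (Real.exp (2 * n + 1))))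
        atTop (𝓝 l)) ∧
    (⋃ n : ℕ, Set.Ico (Real.exp (2 * n)) (Real.exp (2 * n + 1))) ∉ Ccal ∧
    Ccal ⊂ Auni := by
  rw [iUnion_Ico_exp_eq_altUnion]
  have hB := hasUniformDensity_altUnion_natCast
  have hBmeas := measurableSet_altUnion fun m => (m : ℝ)
  have hAuni : (altUnion fun m => Real.exp m) ∈ Auni :=
    ⟨altUnion_mem_Mcal (Real.exp_pos _).le monotone_exp_natCast, by
      rw [logSet_altUnion_exp]
      exact ⟨altUnion_mem_Mcal Nat.cast_zero.ge Nat.mono_cast, hB.lfn_eq_ufn hBmeas⟩⟩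
  have hrho : Tendsto (rho (logSet (altUnion fun m => Real.exp m))) atTop (𝓝 (1 / 2)) := by
    rw [logSet_altUnion_exp]
    exact hB.tendsto_rho hBmeas
  have hnotC : (altUnion fun m => Real.exp m) ∉ Ccal := fun h => not_tendsto_rho_altUnion_exp h.2
  refine ⟨hAuni, hrho, hrho.limUnder_eq, not_tendsto_rho_altUnion_exp, hnotC, ?_⟩
  exact ssubset_of_subset_not_subset Ccal_subset_Auni fun h => hnotC (h hAuni)

end UPN
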